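/- For any $\theta \in (-\pi, \pi)$ with $\theta \ne 0$ and any positive integer $n$, there is an absolute constant $C$ such that $\sum_{m=1}^{n} \frac{\cos(\theta m)}{m} \le \log\left(\min\left\{ n, \frac{1}{|\theta|} \right\}\right) + C$. -/
import Mathlib


open Real

/-- Dirichlet-kernel type bound on partial sums of cosines. -/
lemma cos_partial_sum_bound {θ : ℝ} (hθ : θ ∈ Set.Ioo (-π) π) (hθ0 : θ ≠ 0) (k : ℕ) :
    |∑ i ∈ Finset.range k, Real.cos (θ * i)| ≤ π / |θ| := by
  have hπ := Real.pi_pos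
  have habs : |θ| < π := abs_lt.2 ⟨hθ.1, hθ.2⟩
  have habs0 : 0 < |θ| := abs_pos.2 hθ0
  have h2 : |θ / 2| ≤ π / 2 := by
    rw [abs_div, abs_two]; linarith
  have hsin : |θ| / π ≤ |Real.sin (θ / 2)| := by
    have h := Real.mul_abs_le_abs_sin h2
    have : 2 / π * |θ / 2| = |θ| / π := by
      rw [abs_div, abs_two]; field_simp
    linarith [this ▸ h]
  have hsinpos : 0 < |Real.sin (θ / 2)| := lt_of_lt_of_le (by positivity) hsin
  have key : 2 * Real.sin (θ / 2) * ∑ i ∈ Finset.range k, Real.cos (θ * i)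
      = (fun i : ℕ => Real.sin (θ * i - θ / 2)) k - (fun i : ℕ => Real.sin (θ * i - θ / 2)) 0 := by
    rw [Finset.mul_sum]
    rw [← Finset.sum_range_sub (fun i : ℕ => Real.sin (θ * i - θ / 2)) k]
    refine Finset.sum_congr rfl fun i _ => ?_
    show 2 * Real.sin (θ / 2) * Real.cos (θ * i)
        = Real.sin (θ * ((i : ℕ) + 1 : ℕ) - θ / 2) - Real.sin (θ * i - θ / 2)
    have h1 : θ * (((i : ℕ) + 1 : ℕ) : ℝ) - θ / 2 = θ * i + θ / 2 := by push_cast; ring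
    rw [h1, Real.sin_add, Real.sin_sub]
    ring
  have hb : |2 * Real.sin (θ / 2) * ∑ i ∈ Finset.range k, Real.cos (θ * i)| ≤ 2 := by
    rw [key]
    simp only []
    have h1 := Real.abs_sin_le_one (θ * (k : ℕ) - θ / 2)
    have h2 := Real.abs_sin_le_one (θ * ((0 : ℕ) : ℝ) - θ / 2)
    have h3 := abs_sub (Real.sin (θ * (k : ℕ) - θ / 2)) (Real.sin (θ * ((0 : ℕ) : ℝ) - θ / 2))
    linarith
  rw [abs_mul, abs_mul, abs_two] at hb
  have hS : |∑ i ∈ Finset.range k, Real.cos (θ * i)| ≤ 1 / |Real.sin (θ / 2)| := by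
    rw [le_div_iff₀ hsinpos]
    nlinarith
  refine hS.trans ?_
  rw [div_le_div_iff₀ hsinpos habs0]
  calc 1 * |θ| = (|θ| / π) * π := by field_simp
    _ ≤ |Real.sin (θ / 2)| * π := by nlinarith
    _ = π * |Real.sin (θ / 2)| := mul_comm _ _

lemma telescope_Ioc (h : ℕ → ℝ) {M K : ℕ} (hMK : M ≤ K) :
    ∑ i ∈ Finset.Ioc M K, (h i - h (i + 1)) = h (M + 1) - h (K + 1) := by
  induction K, hMK using Nat.le_induction with
  | base => simp
  | succ K hMK ih =>
      rw [← Finset.Icc_add_one_left_eq_Ioc, Finset.sum_Icc_succ_top (by omega), Finset.Icc_add_one_left_eq_Ioc, ih]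
      ring

/-- Abel summation bound for the tail. -/
lemma tail_bound {θ : ℝ} (hθ : θ ∈ Set.Ioo (-π) π) (hθ0 : θ ≠ 0) {M n : ℕ} (hMn : M < n) :
    |∑ i ∈ Finset.Ioc M n, Real.cos (θ * i) / i| ≤ 2 * (π / |θ|) / (M + 1) := by
  set B : ℝ := π / |θ| with hB
  have hB0 : 0 ≤ B := by
    have := abs_pos.2 hθ0
    positivity
  have hG : ∀ k : ℕ, |∑ i ∈ Finset.range k, Real.cos (θ * i)| ≤ B :=
    cos_partial_sum_bound hθ hθ0
  set G : ℕ → ℝ := fun k => ∑ i ∈ Finset.range k, Real.cos (θ * i) with hGdef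
  have habel := Finset.sum_Ioc_by_parts (fun i : ℕ => ((i : ℝ))⁻¹)
    (fun i : ℕ => Real.cos (θ * i)) hMn
  simp only [smul_eq_mul] at habel
  have heq : ∑ i ∈ Finset.Ioc M n, Real.cos (θ * i) / i
      = ∑ i ∈ Finset.Ioc M n, ((i : ℝ))⁻¹ * Real.cos (θ * i) := by
    refine Finset.sum_congr rfl fun i _ => ?_
    rw [div_eq_inv_mul]
  rw [heq, habel]
  have hsum_bound : |∑ i ∈ Finset.Ioc M (n - 1),
      ((((i : ℕ) + 1 : ℕ) : ℝ)⁻¹ - ((i : ℝ))⁻¹) * G (i + 1)|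
      ≤ (((M : ℝ) + 1)⁻¹ - ((n : ℝ))⁻¹) * B := by
    calc |∑ i ∈ Finset.Ioc M (n - 1), ((((i : ℕ) + 1 : ℕ) : ℝ)⁻¹ - (i : ℝ)⁻¹) * G (i + 1)|
        ≤ ∑ i ∈ Finset.Ioc M (n - 1), |((((i : ℕ) + 1 : ℕ) : ℝ)⁻¹ - (i : ℝ)⁻¹) * G (i + 1)| :=
          Finset.abs_sum_le_sum_abs _ _
      _ ≤ ∑ i ∈ Finset.Ioc M (n - 1), ((i : ℝ)⁻¹ - (((i : ℕ) + 1 : ℕ) : ℝ)⁻¹) * B := by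
          refine Finset.sum_le_sum fun i hi => ?_
          have hi1 : 1 ≤ i := by
            have := (Finset.mem_Ioc.mp hi).1; omega
          have hipos : (0 : ℝ) < i := by exact_mod_cast hi1
          have hmono : ((((i : ℕ) + 1 : ℕ) : ℝ))⁻¹ ≤ ((i : ℝ))⁻¹ := by
            apply inv_anti₀ hipos
            push_cast; linarith
          rw [abs_mul]
          have h1 : |(((i : ℕ) + 1 : ℕ) : ℝ)⁻¹ - (i : ℝ)⁻¹|
              = (i : ℝ)⁻¹ - (((i : ℕ) + 1 : ℕ) : ℝ)⁻¹ := by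
            rw [abs_sub_comm, abs_of_nonneg (by linarith)]
          rw [h1]
          exact mul_le_mul_of_nonneg_left (hG _) (by linarith)
      _ = (((M : ℝ) + 1)⁻¹ - ((n : ℝ))⁻¹) * B := by
          rw [← Finset.sum_mul]
          congr 1
          have := telescope_Ioc (fun i : ℕ => ((i : ℝ))⁻¹) (Nat.le_sub_one_of_lt hMn)
          rw [show ∑ i ∈ Finset.Ioc M (n-1), ((i:ℝ)⁻¹ - (((i:ℕ)+1:ℕ):ℝ)⁻¹)
              = ∑ i ∈ Finset.Ioc M (n-1), ((fun j : ℕ => ((j:ℝ))⁻¹) i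
                - (fun j : ℕ => ((j:ℝ))⁻¹) (i+1)) by push_cast; rfl, this]
          have h5 : n - 1 + 1 = n := by omega
          rw [h5]
          push_cast
          ring
  have hn0 : (0:ℝ) < n := by exact_mod_cast Nat.lt_of_le_of_lt (Nat.zero_le M) hMn
  have hM0 : (0:ℝ) < (M:ℝ) + 1 := by positivity
  have hb1 : |((n : ℝ))⁻¹ * G (n + 1)| ≤ ((n : ℝ))⁻¹ * B := by
    rw [abs_mul, abs_of_nonneg (by positivity : (0:ℝ) ≤ ((n:ℝ))⁻¹)]
    exact mul_le_mul_of_nonneg_left (hG _) (by positivity)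
  have hb2 : |((((M : ℕ) + 1 : ℕ)) : ℝ)⁻¹ * G (M + 1)| ≤ (((M : ℝ)) + 1)⁻¹ * B := by
    rw [abs_mul]
    have : |((((M : ℕ) + 1 : ℕ)) : ℝ)⁻¹| = (((M : ℝ)) + 1)⁻¹ := by
      rw [abs_of_nonneg (by positivity)]; push_cast; ring
    rw [this]
    exact mul_le_mul_of_nonneg_left (hG _) (by positivity)
  have hinv : ((n : ℝ))⁻¹ ≤ (((M : ℝ)) + 1)⁻¹ := by
    apply inv_anti₀ hM0
    have : (M : ℝ) + 1 ≤ n := by exact_mod_cast Nat.succ_le_of_lt hMn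
    linarith
  calc |((n : ℝ))⁻¹ * G (n + 1) - ((((M : ℕ) + 1 : ℕ)) : ℝ)⁻¹ * G (M + 1)
        - ∑ i ∈ Finset.Ioc M (n - 1), ((((i : ℕ) + 1 : ℕ) : ℝ)⁻¹ - ((i : ℝ))⁻¹) * G (i + 1)|
      ≤ |((n : ℝ))⁻¹ * G (n + 1)| + |((((M : ℕ) + 1 : ℕ)) : ℝ)⁻¹ * G (M + 1)|
        + |∑ i ∈ Finset.Ioc M (n - 1), ((((i : ℕ) + 1 : ℕ) : ℝ)⁻¹ - ((i : ℝ))⁻¹) * G (i + 1)| := by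
          calc _ ≤ |((n : ℝ))⁻¹ * G (n + 1) - ((((M : ℕ) + 1 : ℕ)) : ℝ)⁻¹ * G (M + 1)|
              + |∑ i ∈ Finset.Ioc M (n - 1), ((((i : ℕ) + 1 : ℕ) : ℝ)⁻¹ - ((i : ℝ))⁻¹) * G (i + 1)| :=
                abs_sub _ _
            _ ≤ _ := by gcongr; exact abs_sub _ _
    _ ≤ ((n : ℝ))⁻¹ * B + (((M : ℝ)) + 1)⁻¹ * B + (((M : ℝ) + 1)⁻¹ - ((n : ℝ))⁻¹) * B :=
        add_le_add (add_le_add hb1 hb2) hsum_bound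
    _ = 2 * ((M : ℝ) + 1)⁻¹ * B := by ring
    _ = 2 * B / ((M : ℝ) + 1) := by field_simp
    _ = 2 * (π / |θ|) / (M + 1) := by rw [hB]

theorem stmt5 :
    ∃ C : ℝ, ∀ θ : ℝ, θ ∈ Set.Ioo (-π) π → θ ≠ 0 → ∀ n : ℕ, 1 ≤ n →
      ∑ m ∈ Finset.Icc 1 n, Real.cos (θ * m) / m ≤
        Real.log (min (n : ℝ) (1 / |θ|)) + C := by
  use 25
  intro θ hθ hθ0 n hn
  have hπ := Real.pi_pos
  have habs : |θ| < π := abs_lt.2 ⟨hθ.1, hθ.2⟩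
  have habs0 : 0 < |θ| := abs_pos.2 hθ0
  have hmain : ∀ k : ℕ, 1 ≤ k → ∑ m ∈ Finset.Icc 1 k, Real.cos (θ * m) / m
      ≤ (harmonic k : ℝ) := by
    intro k hk
    rw [harmonic_eq_sum_Icc]
    push_cast
    refine Finset.sum_le_sum fun m hm => ?_
    have hm1 : 1 ≤ m := (Finset.mem_Icc.mp hm).1
    have hmpos : (0:ℝ) < m := by exact_mod_cast hm1
    rw [div_eq_mul_inv]
    calc Real.cos (θ * m) * ((m:ℝ))⁻¹ ≤ 1 * ((m:ℝ))⁻¹ :=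
          mul_le_mul_of_nonneg_right (Real.cos_le_one _) (by positivity)
      _ = ((m:ℝ))⁻¹ := one_mul _
  have hlogpi : Real.log π ≤ π - 1 := by
    have := Real.log_le_sub_one_of_pos hπ
    linarith
  rcases le_or_gt (n : ℝ) (1 / |θ|) with hcase | hcase
  · -- n ≤ 1/|θ|
    rw [min_eq_left hcase]
    calc ∑ m ∈ Finset.Icc 1 n, Real.cos (θ * m) / m ≤ (harmonic n : ℝ) := hmain n hn
      _ ≤ 1 + Real.log n := harmonic_le_one_add_log n
      _ ≤ Real.log n + 25 := by linarith
  · -- 1/|θ| < n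
    rw [min_eq_right hcase.le]
    set M : ℕ := ⌊1 / |θ|⌋₊ with hMdef
    have hMle : (M : ℝ) ≤ 1 / |θ| := Nat.floor_le (by positivity)
    have hMlt : 1 / |θ| < (M : ℝ) + 1 := Nat.lt_floor_add_one _
    have hMn : M < n := by
      have : (M : ℝ) < n := lt_of_le_of_lt hMle hcase
      exact_mod_cast this
    -- split the sum
    have hsplit : ∑ m ∈ Finset.Icc 1 n, Real.cos (θ * m) / m
        = ∑ m ∈ Finset.Icc 1 M, Real.cos (θ * m) / m
          + ∑ m ∈ Finset.Ioc M n, Real.cos (θ * m) / m := by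
      have hd : Disjoint (Finset.Ioc 0 M) (Finset.Ioc M n) := by
        rw [Finset.disjoint_left]
        intro a ha ha'
        simp only [Finset.mem_Ioc] at ha ha'
        omega
      rw [show Finset.Icc 1 n = Finset.Ioc 0 n from (Finset.Icc_add_one_left_eq_Ioc 0 n),
          show Finset.Icc 1 M = Finset.Ioc 0 M from (Finset.Icc_add_one_left_eq_Ioc 0 M),
          ← Finset.Ioc_union_Ioc_eq_Ioc (Nat.zero_le M) (le_of_lt hMn),
          Finset.sum_union hd]
    rw [hsplit]
    have htail : ∑ m ∈ Finset.Ioc M n, Real.cos (θ * m) / m ≤ 2 * π := by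
      have h1 := tail_bound hθ hθ0 hMn
      have h2 : 2 * (π / |θ|) / ((M : ℝ) + 1) ≤ 2 * π := by
        rw [div_le_iff₀ (by positivity)]
        have h4 : 1 < ((M : ℝ) + 1) * |θ| := (div_lt_iff₀ habs0).mp hMlt
        have h3 : π / |θ| ≤ π * ((M : ℝ) + 1) := by
          rw [div_le_iff₀ habs0]
          nlinarith
        nlinarith
      calc ∑ m ∈ Finset.Ioc M n, Real.cos (θ * m) / m
          ≤ |∑ m ∈ Finset.Ioc M n, Real.cos (θ * m) / m| := le_abs_self _
        _ ≤ 2 * (π / |θ|) / ((M : ℝ) + 1) := h1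
        _ ≤ 2 * π := h2
    have hlog_lb : -(π - 1) ≤ Real.log (1 / |θ|) := by
      rw [one_div, Real.log_inv]
      have : Real.log |θ| ≤ Real.log π := Real.log_le_log habs0 habs.le
      linarith
    rcases Nat.eq_zero_or_pos M with hM0 | hMpos
    · -- M = 0 : head sum empty
      have hhead : ∑ m ∈ Finset.Icc 1 M, Real.cos (θ * m) / m = 0 := by
        rw [hM0]; simp
      rw [hhead, zero_add]
      have : 2 * π ≤ Real.log (1 / |θ|) + 25 := by
        nlinarith [Real.pi_le_four]
      linarith
    · have hhead : ∑ m ∈ Finset.Icc 1 M, Real.cos (θ * m) / m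
          ≤ 1 + Real.log (1 / |θ|) := by
        calc ∑ m ∈ Finset.Icc 1 M, Real.cos (θ * m) / m ≤ (harmonic M : ℝ) := hmain M hMpos
          _ ≤ 1 + Real.log M := harmonic_le_one_add_log M
          _ ≤ 1 + Real.log (1 / |θ|) := by
              have : Real.log (M : ℝ) ≤ Real.log (1 / |θ|) :=
                Real.log_le_log (by exact_mod_cast hMpos) hMle
              linarith
      have : 2 * π ≤ 24 := by nlinarith [Real.pi_le_four]
      linarith
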